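/- arXiv:2203.04233 — 4 statements merged into one kernel-verified Lean document; each statement's English description precedes it below -/
import Mathlib

section
/- Let V be a finite-dimensional real inner product space endowed with an r-fold vector cross product χ, and let R be an algebraic curvature operator on V. For an orthonormal (r−1)-tuple u = (u₁,…,u_{r−1}) in V, write E_u = span{u₁,…,u_{r−1}}, let P_u be the orthogonal projection of V onto E_u^⊥, and let J_u : V → V denote the map z ↦ χ(u₁,…,u_{r−1},z). Then the following are equivalent: (1) for every orthonormal (r−1)-tuple u, all w₁, w₂ ∈ E_u^⊥, all x ∈ E_u and all z ∈ E_u^⊥ one has ⟨(R(w₁,w₂) − R(J_u w₁, J_u w₂))x, z⟩ = 0 (i.e., R(w₁,w₂) − R(J_u w₁, J_u w₂) lies in 𝔰𝔬(E_u) ⊕ 𝔰𝔬(E_u^⊥)); (2) for every orthonormal (r−1)-tuple u, all w₃ ∈ E_u^⊥, all w₄ ∈ E_u and all z ∈ E_u^⊥ one has P_u(R(w₃,w₄)(J_u z)) = J_u(P_u(R(w₃,w₄)z)) (i.e., the orthogonal projection of R(w₃,w₄) to 𝔰𝔬(E_u^⊥) commutes with J_u restricted to E_u^⊥). -/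
/-! Fix `u`, and write `K = E_uᗮ` and `J = χ(u, ·)`. The VCP axioms make `J` skew-adjoint, map
`V` into `K`, and restrict to an isometry of `K` with `J² = -1`. Pair symmetry turns
`⟪R(w₁,w₂)x, z⟫` into `⟪R(z,x)w₂, w₁⟫`, so (1) says that for `z ∈ K`, `x ∈ E_u` the form
`(p, q) ↦ ⟪R(z,x)p, q⟫` on `K` is `J`-invariant, while (2), tested against `q ∈ K`, says
`⟪R(z,x)(Jp), q⟫ = -⟪R(z,x)p, Jq⟫`. Because `J² = -1` on `K`, these two are equivalent. -/

open RealInnerProductSpace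

variable {V : Type*} [NormedAddCommGroup V] [InnerProductSpace ℝ V]

/-- An `r`-fold vector cross product on a real inner product space: an alternating
multilinear map `χ` whose value is orthogonal to each of its arguments and whose
squared norm is the Gram determinant of the arguments. -/
def IsVCP {r : ℕ} (χ : AlternatingMap ℝ V V (Fin r)) : Prop :=
  (∀ v : Fin r → V, ∀ i : Fin r, ⟪χ v, v i⟫ = 0) ∧
  (∀ v : Fin r → V, ⟪χ v, χ v⟫ = (Matrix.of fun i j : Fin r => ⟪v i, v j⟫).det)

/-- An algebraic curvature operator: a bilinear map `V × V → End(V)` that is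
antisymmetric, takes skew-adjoint values, and satisfies the first Bianchi identity. -/
def IsAlgCurvature (R : V →ₗ[ℝ] V →ₗ[ℝ] V →ₗ[ℝ] V) : Prop :=
  (∀ x y, R x y = - R y x) ∧
  (∀ x y z w, ⟪R x y z, w⟫ = - ⟪R x y w, z⟫) ∧
  (∀ x y z, R x y z + R y z x + R z x y = 0)

/-- Orthogonal projection onto the orthogonal complement of the span of `S`. -/
noncomputable def projPerp [FiniteDimensional ℝ V] (S : Set V) (z : V) : V :=
  (Submodule.orthogonalProjection (Submodule.span ℝ S)ᗮ z : V)

/-- The constant-curvature operator `R^Id(x,y)z = ⟪y,z⟫ • x - ⟪x,z⟫ • y`. -/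
noncomputable def RId : V →ₗ[ℝ] V →ₗ[ℝ] V →ₗ[ℝ] V :=
  LinearMap.mk₂ ℝ
    (fun x y =>
      { toFun := fun z => ⟪y, z⟫ • x - ⟪x, z⟫ • y
        map_add' := fun a b => by simp only [inner_add_right, add_smul]; abel
        map_smul' := fun c a => by
          simp only [inner_smul_right, RingHom.id_apply, smul_sub, smul_smul] })
    (fun x x' y => by ext z; simp [inner_add_left, add_smul]; abel)
    (fun c x y => by ext z; simp [real_inner_smul_left, smul_sub, smul_smul, mul_comm])
    (fun x y y' => by ext z; simp [inner_add_left, add_smul]; abel)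
    (fun c x y => by ext z; simp [real_inner_smul_left, smul_sub, smul_smul, mul_comm])

/-- The first CR-integrability condition for an algebraic curvature operator `R`
with respect to an `(m+2)`-fold VCP `χ`: for every orthonormal `(m+2)`-tuple
`w = (w₁, …, w_r)` and every `z` orthogonal to `w₂, …, w_r`, the orthogonal
projection `P` onto `span{w₂,…,w_r}ᗮ` satisfies
`P (R(w₁,w₂) (χ(w₂,…,w_r,z))) = χ(w₂,…,w_r, P (R(w₁,w₂) z))`. -/
def FirstCR [FiniteDimensional ℝ V] {m : ℕ} (χ : AlternatingMap ℝ V V (Fin (m + 2)))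
    (R : V →ₗ[ℝ] V →ₗ[ℝ] V →ₗ[ℝ] V) : Prop :=
  ∀ w : Fin (m + 2) → V, Orthonormal ℝ w → ∀ z : V,
    (∀ i : Fin (m + 1), ⟪z, Fin.tail w i⟫ = 0) →
    projPerp (Set.range (Fin.tail w)) (R (w 0) (w 1) (χ (Fin.snoc (Fin.tail w) z))) =
      χ (Fin.snoc (Fin.tail w) (projPerp (Set.range (Fin.tail w)) (R (w 0) (w 1) z)))

theorem Submodule.eq_iff_forall_inner_eq_of_mem {K : Submodule ℝ V} {a b : V} (ha : a ∈ K)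
    (hb : b ∈ K) : a = b ↔ ∀ w ∈ K, ⟪a, w⟫ = ⟪b, w⟫ := by
  refine ⟨fun h _ _ => h ▸ rfl, fun h => ?_⟩
  rw [← sub_eq_zero, ← inner_self_eq_zero (𝕜 := ℝ)]
  simp only [inner_sub_left, h (a - b) (K.sub_mem ha hb), sub_self]

theorem mem_orthogonal_span_range_iff {ι : Type*} {u : ι → V} {v : V} :
    v ∈ (Submodule.span ℝ (Set.range u))ᗮ ↔ ∀ i, ⟪u i, v⟫ = 0 := by
  refine ⟨fun h i =>
      Submodule.inner_right_of_mem_orthogonal (Submodule.subset_span (Set.mem_range_self i)) h,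
    fun h => (Submodule.mem_orthogonal _ _).mpr fun y hy => ?_⟩
  have hspan : Submodule.span ℝ (Set.range u) ≤ (ℝ ∙ v)ᗮ := Submodule.span_le.mpr <| by
    rintro _ ⟨i, rfl⟩
    exact Submodule.mem_orthogonal_singleton_iff_inner_left.mpr (h i)
  exact Submodule.mem_orthogonal_singleton_iff_inner_left.mp (hspan hy)

theorem Matrix.det_gram_of_pairwise_inner_eq_zero {ι : Type*} [Fintype ι] [DecidableEq ι]
    {v : ι → V} (hv : Pairwise fun i j => ⟪v i, v j⟫ = 0) :
    (Matrix.gram ℝ v).det = ∏ i, ⟪v i, v i⟫ := by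
  rw [← Matrix.det_diagonal]
  congr 1
  ext i j
  rcases eq_or_ne i j with rfl | hij
  · simp
  · simp [hv hij, hij]

theorem projPerp_mem [FiniteDimensional ℝ V] (S : Set V) (z : V) :
    projPerp S z ∈ (Submodule.span ℝ S)ᗮ :=
  (Submodule.orthogonalProjectionOnto _ z).2

theorem inner_projPerp_of_mem [FiniteDimensional ℝ V] {S : Set V} (z : V) {w : V}
    (hw : w ∈ (Submodule.span ℝ S)ᗮ) : ⟪projPerp S z, w⟫ = ⟪z, w⟫ :=
  Submodule.inner_orthogonalProjectionOnto_eq_of_mem_right ⟨w, hw⟩ z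

theorem forall_inner_map_map_eq_iff {K : Submodule ℝ V} {T J : V → V} (hJK : ∀ p ∈ K, J p ∈ K)
    (hJJ : ∀ p ∈ K, J (J p) = -p) :
    (∀ p ∈ K, ∀ q ∈ K, ⟪T (J p), J q⟫ = ⟪T p, q⟫) ↔
      ∀ p ∈ K, ∀ q ∈ K, ⟪T (J p), q⟫ = -⟪T p, J q⟫ := by
  refine ⟨fun h p hp q hq => ?_, fun h p hp q hq => ?_⟩
  · rw [← h p hp (J q) (hJK q hq), hJJ q hq, inner_neg_right, neg_neg]
  · rw [h p hp (J q) (hJK q hq), hJJ q hq, inner_neg_right, neg_neg]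

theorem AlternatingMap.map_snoc_add {n : ℕ} (χ : AlternatingMap ℝ V V (Fin (n + 1)))
    (u : Fin n → V) (z w : V) :
    χ (Fin.snoc u (z + w)) = χ (Fin.snoc u z) + χ (Fin.snoc u w) := by
  simpa only [MultilinearMap.curryRight_apply, AlternatingMap.coe_multilinearMap] using
    map_add (χ.toMultilinearMap.curryRight u) z w

theorem IsAlgCurvature.inner_pair_symm {R : V →ₗ[ℝ] V →ₗ[ℝ] V →ₗ[ℝ] V} (hR : IsAlgCurvature R)
    (x y z w : V) : ⟪R x y z, w⟫ = ⟪R z w x, y⟫ := by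
  obtain ⟨hanti, hskew, hbianchi⟩ := hR
  have bianchi : ∀ a b c d : V, ⟪R a b c, d⟫ + ⟪R b c a, d⟫ + ⟪R c a b, d⟫ = 0 := fun a b c d => by
    simpa only [inner_add_left, inner_zero_left] using congrArg (⟪·, d⟫) (hbianchi a b c)
  have anti : ∀ a b c d : V, ⟪R a b c, d⟫ = -⟪R b a c, d⟫ := fun a b c d => by
    rw [hanti a b, LinearMap.neg_apply, inner_neg_left]
  -- sum of the Bianchi identities for the four cyclic shifts of `x y z w`
  linarith [bianchi x y z w, bianchi y z w x, bianchi z w x y, bianchi w x y z,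
    hskew y z w x, hskew z w y x, hskew w x y z, hskew x y w z, anti x z w y, hskew z x w y,
    anti y w x z, hskew w y x z]

theorem IsAlgCurvature.forall_inner_sub_apply_eq_zero_iff {R : V →ₗ[ℝ] V →ₗ[ℝ] V →ₗ[ℝ] V}
    (hR : IsAlgCurvature R) (J : V → V) (K L : Submodule ℝ V) :
    (∀ w₁ ∈ K, ∀ w₂ ∈ K, ∀ x ∈ L, ∀ z ∈ K, ⟪(R w₁ w₂ - R (J w₁) (J w₂)) x, z⟫ = 0) ↔
      ∀ z ∈ K, ∀ x ∈ L, ∀ p ∈ K, ∀ q ∈ K, ⟪R z x (J p), J q⟫ = ⟪R z x p, q⟫ := by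
  have swap (a b x z : V) : ⟪R a b x, z⟫ = ⟪R z x b, a⟫ := by
    rw [hR.inner_pair_symm, hR.2.1, hR.1 x z, LinearMap.neg_apply, inner_neg_left, neg_neg]
  simp only [LinearMap.sub_apply, inner_sub_left, sub_eq_zero]
  refine ⟨fun h z hz x hx p hp q hq => ?_, fun h w₁ hw₁ w₂ hw₂ x hx z hz => ?_⟩
  · rw [← swap (J q), ← swap q]
    exact (h q hq p hp x hx z hz).symm
  · rw [swap w₁, swap (J w₁)]
    exact (h z hz x hx w₂ hw₂ w₁ hw₁).symm

namespace IsVCP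

variable {n : ℕ} {χ : AlternatingMap ℝ V V (Fin (n + 1))} (hχ : IsVCP χ) (u : Fin n → V)

include hχ

theorem inner_snoc_self (z : V) : ⟪χ (Fin.snoc u z), z⟫ = 0 := by
  simpa only [Fin.snoc_last] using hχ.1 (Fin.snoc u z) (Fin.last n)

theorem inner_snoc_eq_neg (z w : V) : ⟪χ (Fin.snoc u z), w⟫ = -⟪χ (Fin.snoc u w), z⟫ := by
  have h := hχ.inner_snoc_self u (z + w)
  rw [AlternatingMap.map_snoc_add, inner_add_left, inner_add_right, inner_add_right,
    hχ.inner_snoc_self, hχ.inner_snoc_self] at h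
  linarith

theorem snoc_mem_orthogonal (z : V) : χ (Fin.snoc u z) ∈ (Submodule.span ℝ (Set.range u))ᗮ :=
  mem_orthogonal_span_range_iff.mpr fun i => by
    simpa only [Fin.snoc_castSucc, real_inner_comm] using hχ.1 (Fin.snoc u z) i.castSucc

variable {u}

theorem inner_snoc_snoc_self (hu : Orthonormal ℝ u) {z : V}
    (hz : z ∈ (Submodule.span ℝ (Set.range u))ᗮ) :
    ⟪χ (Fin.snoc u z), χ (Fin.snoc u z)⟫ = ⟪z, z⟫ := by
  have hzu := mem_orthogonal_span_range_iff.mp hz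
  have horth : Pairwise fun i j =>
      ⟪(Fin.snoc u z : Fin (n + 1) → V) i, (Fin.snoc u z : Fin (n + 1) → V) j⟫ = 0 := by
    intro i j hij
    induction i using Fin.lastCases <;> induction j using Fin.lastCases
    · exact absurd rfl hij
    · simpa [real_inner_comm] using hzu _
    · simpa using hzu _
    · simpa using hu.2 (by simpa using hij)
  rw [hχ.2, ← Matrix.gram, Matrix.det_gram_of_pairwise_inner_eq_zero horth,
    Fin.prod_univ_castSucc]
  simp [hu.1]

theorem inner_snoc_snoc (hu : Orthonormal ℝ u) {z w : V}
    (hz : z ∈ (Submodule.span ℝ (Set.range u))ᗮ) (hw : w ∈ (Submodule.span ℝ (Set.range u))ᗮ) :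
    ⟪χ (Fin.snoc u z), χ (Fin.snoc u w)⟫ = ⟪z, w⟫ := by
  have h := hχ.inner_snoc_snoc_self hu (Submodule.add_mem _ hz hw)
  rw [AlternatingMap.map_snoc_add] at h
  simp only [inner_add_left, inner_add_right, hχ.inner_snoc_snoc_self hu hz,
    hχ.inner_snoc_snoc_self hu hw, real_inner_comm z w,
    real_inner_comm (χ (Fin.snoc u z)) (χ (Fin.snoc u w))] at h
  linarith

theorem snoc_snoc (hu : Orthonormal ℝ u) {z : V} (hz : z ∈ (Submodule.span ℝ (Set.range u))ᗮ) :
    χ (Fin.snoc u (χ (Fin.snoc u z))) = -z := by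
  refine (Submodule.eq_iff_forall_inner_eq_of_mem (hχ.snoc_mem_orthogonal u _)
    (Submodule.neg_mem _ hz)).mpr fun w hw => ?_
  rw [hχ.inner_snoc_eq_neg, hχ.inner_snoc_snoc hu hw hz, inner_neg_left, real_inner_comm]

theorem forall_projPerp_snoc_comm_iff [FiniteDimensional ℝ V] (T : V → V) :
    (∀ z ∈ (Submodule.span ℝ (Set.range u))ᗮ,
      projPerp (Set.range u) (T (χ (Fin.snoc u z))) =
        χ (Fin.snoc u (projPerp (Set.range u) (T z)))) ↔
    ∀ p ∈ (Submodule.span ℝ (Set.range u))ᗮ, ∀ q ∈ (Submodule.span ℝ (Set.range u))ᗮ,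
      ⟪T (χ (Fin.snoc u p)), q⟫ = -⟪T p, χ (Fin.snoc u q)⟫ := by
  refine forall₂_congr fun p _ => ?_
  rw [Submodule.eq_iff_forall_inner_eq_of_mem (projPerp_mem _ _) (hχ.snoc_mem_orthogonal u _)]
  refine forall₂_congr fun q hq => ?_
  rw [inner_projPerp_of_mem _ hq, hχ.inner_snoc_eq_neg, real_inner_comm (projPerp _ _),
    inner_projPerp_of_mem _ (hχ.snoc_mem_orthogonal u q)]

end IsVCP

/-- For an algebraic curvature operator `R` on a space with an `(m+2)`-fold VCP `χ`,
the following are equivalent: (1) for every orthonormal `(r-1)`-tuple `u`, all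
`w₁, w₂ ∈ E_uᗮ`, all `x ∈ E_u` and `z ∈ E_uᗮ`,
`⟪(R(w₁,w₂) - R(J_u w₁, J_u w₂)) x, z⟫ = 0` (where `J_u z = χ(u₁,…,u_{r-1},z)`);
(2) for every such `u`, all `w₃ ∈ E_uᗮ`, `w₄ ∈ E_u` and `z ∈ E_uᗮ`,
`P_u (R(w₃,w₄) (J_u z)) = J_u (P_u (R(w₃,w₄) z))`. -/
theorem firstCR_equiv_conditions {V : Type*} [NormedAddCommGroup V] [InnerProductSpace ℝ V]
    [FiniteDimensional ℝ V] {m : ℕ}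
    (χ : AlternatingMap ℝ V V (Fin (m + 2))) (hχ : IsVCP χ)
    (R : V →ₗ[ℝ] V →ₗ[ℝ] V →ₗ[ℝ] V) (hR : IsAlgCurvature R) :
    (∀ u : Fin (m + 1) → V, Orthonormal ℝ u →
      ∀ w₁ ∈ (Submodule.span ℝ (Set.range u))ᗮ, ∀ w₂ ∈ (Submodule.span ℝ (Set.range u))ᗮ,
      ∀ x ∈ Submodule.span ℝ (Set.range u), ∀ z ∈ (Submodule.span ℝ (Set.range u))ᗮ,
        ⟪(R w₁ w₂ - R (χ (Fin.snoc u w₁)) (χ (Fin.snoc u w₂))) x, z⟫ = 0) ↔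
    (∀ u : Fin (m + 1) → V, Orthonormal ℝ u →
      ∀ w₃ ∈ (Submodule.span ℝ (Set.range u))ᗮ, ∀ w₄ ∈ Submodule.span ℝ (Set.range u),
      ∀ z ∈ (Submodule.span ℝ (Set.range u))ᗮ,
        projPerp (Set.range u) (R w₃ w₄ (χ (Fin.snoc u z))) =
          χ (Fin.snoc u (projPerp (Set.range u) (R w₃ w₄ z)))) := by
  refine forall₂_congr fun u hu => ?_
  refine (hR.forall_inner_sub_apply_eq_zero_iff (fun w => χ (Fin.snoc u w)) _ _).trans ?_
  refine forall₂_congr fun z _ => forall₂_congr fun x _ => ?_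
  rw [hχ.forall_projPerp_snoc_comm_iff]
  exact forall_inner_map_map_eq_iff (fun p _ => hχ.snoc_mem_orthogonal u p)
    (fun p hp => hχ.snoc_snoc hu hp)
end

section
/- Let V be a finite-dimensional real inner product space endowed with an r-fold vector cross product χ, and let R be an algebraic curvature operator on V such that R(x,y)z = 0 whenever ⟨z,x⟩ = ⟨z,y⟩ = 0 (i.e., R(x,y) ∈ 𝔰𝔬(span{x,y}) for all x,y ∈ V). Then for every orthonormal (r−1)-tuple u = (u₁,…,u_{r−1}) with E_u = span{u₁,…,u_{r−1}}, every w₃ ∈ E_u^⊥, every w₄ ∈ E_u and every z ∈ E_u^⊥, one has P_u(R(w₃,w₄)(χ(u₁,…,u_{r−1},z))) = χ(u₁,…,u_{r−1}, P_u(R(w₃,w₄)z)), where P_u is the orthogonal projection of V onto E_u^⊥. -/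
open RealInnerProductSpace

variable {V : Type*} [NormedAddCommGroup V] [InnerProductSpace ℝ V]

/-
Write `K = span{u₁,…,u_{r-1}}`. Both `χ(u, z)` and `z` lie in `Kᗮ`, and the point is that
`R(w₃,w₄)` maps `Kᗮ` into `K`, so that both sides of the identity vanish.
Indeed, for `x ⊥ y` the form `⟪R(x,y)s, t⟫` vanishes on `yᗮ × yᗮ`: splitting off the
`x`-components of `s` and `t`, flatness kills everything except `⟪R(x,y)x, x⟫`, which
vanishes by skew-adjointness. Apply this with `x = w₃`, `y = w₄ ∈ K`.
-/

theorem exists_inner_sub_smul_self_eq_zero (s x : V) : ∃ c : ℝ, ⟪s - c • x, x⟫ = 0 := by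
  by_cases hx : x = 0
  · exact ⟨0, by simp [hx]⟩
  refine ⟨⟪s, x⟫ / ⟪x, x⟫, ?_⟩
  have hxx : ⟪x, x⟫ ≠ 0 := inner_self_ne_zero.2 hx
  rw [inner_sub_left, real_inner_smul_left, div_mul_cancel₀ _ hxx, sub_self]

theorem Submodule.mem_orthogonal_span_range {ι : Type*} {u : ι → V} {v : V}
    (h : ∀ i, ⟪u i, v⟫ = 0) : v ∈ (Submodule.span ℝ (Set.range u))ᗮ := by
  have hortho : Submodule.span ℝ (Set.range u) ⟂ Submodule.span ℝ {v} :=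
    Submodule.isOrtho_span.2 fun _ ⟨i, hi⟩ _ hv => by
      rw [← hi, Set.mem_singleton_iff.1 hv]; exact h i
  exact hortho.symm (Submodule.mem_span_singleton_self v)

theorem IsVCP.apply_snoc_mem_orthogonal {n : ℕ} {χ : AlternatingMap ℝ V V (Fin (n + 1))}
    (hχ : IsVCP χ) (u : Fin n → V) (z : V) :
    χ (Fin.snoc u z) ∈ (Submodule.span ℝ (Set.range u))ᗮ :=
  Submodule.mem_orthogonal_span_range fun i => by
    simpa [real_inner_comm] using hχ.1 (Fin.snoc u z) i.castSucc

section FlatCurvature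

variable {R : V →ₗ[ℝ] V →ₗ[ℝ] V →ₗ[ℝ] V}

theorem inner_apply_eq_zero_of_flat (hskew : ∀ x y z w, ⟪R x y z, w⟫ = - ⟪R x y w, z⟫)
    (hflat : ∀ x y z : V, ⟪z, x⟫ = 0 → ⟪z, y⟫ = 0 → R x y z = 0) {x y z t : V}
    (hx : ⟪t, x⟫ = 0) (hy : ⟪t, y⟫ = 0) : ⟪R x y z, t⟫ = 0 := by
  rw [hskew, hflat x y t hx hy, inner_zero_left, neg_zero]

theorem inner_apply_eq_zero_of_orthogonal
    (hskew : ∀ x y z w, ⟪R x y z, w⟫ = - ⟪R x y w, z⟫)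
    (hflat : ∀ x y z : V, ⟪z, x⟫ = 0 → ⟪z, y⟫ = 0 → R x y z = 0) {x y s t : V}
    (hxy : ⟪x, y⟫ = 0) (hs : ⟪s, y⟫ = 0) (ht : ⟪t, y⟫ = 0) : ⟪R x y s, t⟫ = 0 := by
  obtain ⟨c, hcx⟩ := exists_inner_sub_smul_self_eq_zero s x
  obtain ⟨d, hdx⟩ := exists_inner_sub_smul_self_eq_zero t x
  have hsx : R x y s = c • R x y x := by
    have h := hflat x y (s - c • x) hcx (by simp [inner_sub_left, real_inner_smul_left, hs, hxy])
    rwa [map_sub, map_smul, sub_eq_zero] at h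
  have htx : ⟪R x y x, t - d • x⟫ = 0 :=
    inner_apply_eq_zero_of_flat hskew hflat hdx
      (by simp [inner_sub_left, real_inner_smul_left, ht, hxy])
  have hxx : ⟪R x y x, x⟫ = 0 := by linarith [hskew x y x x]
  calc ⟪R x y s, t⟫ = c * ⟪R x y x, t - d • x⟫ + c * d * ⟪R x y x, x⟫ := by
        rw [hsx, real_inner_smul_left, inner_sub_right, real_inner_smul_right]; ring
    _ = 0 := by rw [htx, hxx]; ring

end FlatCurvature

/-- If an algebraic curvature operator `R` on a space with an `(m+2)`-fold VCP `χ`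
satisfies `R(x,y)z = 0` whenever `z ⊥ x` and `z ⊥ y`, then for every orthonormal
`(r-1)`-tuple `u`, every `w₃ ∈ E_uᗮ`, `w₄ ∈ E_u` and `z ∈ E_uᗮ`,
`P_u (R(w₃,w₄) (χ(u₁,…,u_{r-1},z))) = χ(u₁,…,u_{r-1}, P_u (R(w₃,w₄) z))`. -/
theorem flat_curvature_satisfies_commutation {V : Type*} [NormedAddCommGroup V]
    [InnerProductSpace ℝ V] [FiniteDimensional ℝ V] {m : ℕ}
    (χ : AlternatingMap ℝ V V (Fin (m + 2))) (hχ : IsVCP χ)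
    (R : V →ₗ[ℝ] V →ₗ[ℝ] V →ₗ[ℝ] V) (hR : IsAlgCurvature R)
    (hflat : ∀ x y z : V, ⟪z, x⟫ = 0 → ⟪z, y⟫ = 0 → R x y z = 0) :
    ∀ u : Fin (m + 1) → V, Orthonormal ℝ u →
      ∀ w₃ ∈ (Submodule.span ℝ (Set.range u))ᗮ, ∀ w₄ ∈ Submodule.span ℝ (Set.range u),
      ∀ z ∈ (Submodule.span ℝ (Set.range u))ᗮ,
        projPerp (Set.range u) (R w₃ w₄ (χ (Fin.snoc u z))) =
          χ (Fin.snoc u (projPerp (Set.range u) (R w₃ w₄ z))) := by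
  intro u _ w₃ hw₃ w₄ hw₄ z hz
  have hw₃₄ : ⟪w₃, w₄⟫ = 0 := Submodule.inner_left_of_mem_orthogonal hw₄ hw₃
  have hkill : ∀ v ∈ (Submodule.span ℝ (Set.range u))ᗮ,
      projPerp (Set.range u) (R w₃ w₄ v) = 0 := fun v hv => by
    simp only [projPerp, ZeroMemClass.coe_eq_zero, Submodule.orthogonalProjectionOnto_eq_zero_iff]
    exact (Submodule.mem_orthogonal' _ _).2 fun t ht =>
      inner_apply_eq_zero_of_orthogonal hR.2.1 hflat hw₃₄
        (Submodule.inner_left_of_mem_orthogonal hw₄ hv)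
        (Submodule.inner_left_of_mem_orthogonal hw₄ ht)
  rw [hkill _ (hχ.apply_snoc_mem_orthogonal u z), hkill z hz,
    χ.map_coord_zero (Fin.last _) (Fin.snoc_last _ _)]
end

section
/- Let V be an 8-dimensional real inner product space endowed with a 3-fold vector cross product χ, and let R be an algebraic curvature operator on V satisfying the first CR-integrability condition associated with χ (i.e., for every orthonormal triple (w₁,w₂,w₃) in V and every z ∈ V orthogonal to both w₂ and w₃ one has P(R(w₁,w₂)(χ(w₂,w₃,z))) = χ(w₂,w₃, P(R(w₁,w₂)z)), where P is the orthogonal projection of V onto span{w₂,w₃}^⊥). Then for all x, y ∈ V: R(x,y)z = 0 whenever z is orthogonal to both x and y, and R(x,y) maps span{x,y} into itself (i.e., R(x,y) ∈ 𝔰𝔬(E_{x∧y}) for every oriented 2-plane E_{x∧y}). -/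
open RealInnerProductSpace

variable {V : Type*} [NormedAddCommGroup V] [InnerProductSpace ℝ V]

/-! For orthonormal `a, b, c` the map `J = χ(b, c, ·)` is a complex structure on `{b, c}ᗮ`, and,
tested against vectors of `{b, c}ᗮ`, the CR condition says that `J` is skew-adjoint there for the
bilinear form `⟪R(a, b) ·, ·⟫`. Given `z ⊥ b` and `v ⊥ a, b`, in dimension at least `7` some `c`
is orthogonal to `a, b, z, v, χ(b, z, v), χ(b, z, a)`; the condition for `c`, for `χ(b, c, z)` in
place of `c` and for `v` in place of `c` gives three linear relations that force
`⟪R(a, b) z, v⟫ = 0`. Skew-adjointness and the first Bianchi identity turn this into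
`R(x, y) z = 0` for `z ⊥ x, y`, and then skew-adjointness makes `R(x, y)` preserve `span {x, y}`. -/

namespace AlternatingMap

section Semiring

variable {R M N : Type*} [Semiring R] [AddCommMonoid M] [Module R M] [AddCommMonoid N]
  [Module R N] (f : AlternatingMap R M N (Fin 3))

theorem map_vec3_smul_fst (t : R) (x y z : M) : f ![t • x, y, z] = t • f ![x, y, z] := by
  have h := f.map_update_smul ![x, y, z] 0 t x
  have e : ∀ w, Function.update ![x, y, z] 0 w = ![w, y, z] := fun w => by
    ext i; fin_cases i <;> rfl
  rwa [e, e] at h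

theorem map_vec3_smul_snd (t : R) (x y z : M) : f ![x, t • y, z] = t • f ![x, y, z] := by
  have h := f.map_update_smul ![x, y, z] 1 t y
  have e : ∀ w, Function.update ![x, y, z] 1 w = ![x, w, z] := fun w => by
    ext i; fin_cases i <;> rfl
  rwa [e, e] at h

theorem map_vec3_add_thd (x y z w : M) : f ![x, y, z + w] = f ![x, y, z] + f ![x, y, w] := by
  have h := f.map_update_add ![x, y, z] 2 z w
  have e : ∀ u, Function.update ![x, y, z] 2 u = ![x, y, u] := fun u => by
    ext i; fin_cases i <;> rfl
  rwa [e, e, e] at h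

end Semiring

theorem map_vec3_swap_snd_thd {R M N : Type*} [Semiring R] [AddCommMonoid M] [Module R M]
    [AddCommGroup N] [Module R N] (f : AlternatingMap R M N (Fin 3)) (x y z : M) :
    f ![x, z, y] = -f ![x, y, z] := by
  have h := f.map_swap ![x, y, z] (i := 1) (j := 2) (by decide)
  have e : ![x, y, z] ∘ Equiv.swap (1 : Fin 3) 2 = ![x, z, y] := by
    ext i; fin_cases i <;> rfl
  rwa [e] at h

end AlternatingMap

namespace IsVCP

variable {χ : AlternatingMap ℝ V V (Fin 3)}

theorem inner_fst (hχ : IsVCP χ) (x y z : V) : ⟪χ ![x, y, z], x⟫ = 0 := by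
  simpa using hχ.1 ![x, y, z] 0

theorem inner_snd (hχ : IsVCP χ) (x y z : V) : ⟪χ ![x, y, z], y⟫ = 0 := by
  simpa using hχ.1 ![x, y, z] 1

theorem inner_thd (hχ : IsVCP χ) (x y z : V) : ⟪χ ![x, y, z], z⟫ = 0 := by
  simpa using hχ.1 ![x, y, z] 2

theorem inner_eq_neg_inner (hχ : IsVCP χ) (x y z w : V) :
    ⟪χ ![x, y, z], w⟫ = -⟪χ ![x, y, w], z⟫ := by
  have h := hχ.inner_thd x y (z + w)
  rw [χ.map_vec3_add_thd, inner_add_left, inner_add_right, inner_add_right,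
    hχ.inner_thd, hχ.inner_thd] at h
  linarith

theorem inner_eq_inner_snd (hχ : IsVCP χ) (x y z w : V) :
    ⟪χ ![x, y, z], w⟫ = ⟪y, χ ![x, z, w]⟫ := by
  rw [hχ.inner_eq_neg_inner, ← inner_neg_left, ← χ.map_vec3_swap_snd_thd, hχ.inner_eq_neg_inner,
    ← inner_neg_left, ← χ.map_vec3_swap_snd_thd, real_inner_comm]

theorem inner_self_of_orthogonal (hχ : IsVCP χ) {b c z : V} (hbc : ⟪b, c⟫ = 0)
    (hzb : ⟪z, b⟫ = 0) (hzc : ⟪z, c⟫ = 0) :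
    ⟪χ ![b, c, z], χ ![b, c, z]⟫ = ⟪b, b⟫ * ⟪c, c⟫ * ⟪z, z⟫ := by
  rw [hχ.2, Matrix.det_fin_three]
  simp only [Matrix.of_apply, Matrix.cons_val_zero, Matrix.cons_val_one, Matrix.cons_val_two,
    Matrix.head_cons, Matrix.tail_cons]
  rw [real_inner_comm b c, real_inner_comm z b, real_inner_comm z c, hbc, hzb, hzc]
  ring

theorem apply_apply_of_orthogonal (hχ : IsVCP χ) {b c z : V} (hbc : ⟪b, c⟫ = 0)
    (hzb : ⟪z, b⟫ = 0) (hzc : ⟪z, c⟫ = 0) : χ ![b, c, χ ![b, c, z]] = -(⟪b, b⟫ * ⟪c, c⟫) • z := by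
  set k := ⟪b, b⟫ * ⟪c, c⟫
  set u := χ ![b, c, z]
  have huu : ⟪u, u⟫ = k * ⟪z, z⟫ := hχ.inner_self_of_orthogonal hbc hzb hzc
  have hJu : ⟪χ ![b, c, u], χ ![b, c, u]⟫ = k * (k * ⟪z, z⟫) := by
    rw [hχ.inner_self_of_orthogonal hbc (hχ.inner_fst b c z) (hχ.inner_snd b c z), huu]
  have hcross : ⟪χ ![b, c, u], z⟫ = -(k * ⟪z, z⟫) := by
    rw [hχ.inner_eq_neg_inner, huu]
  have hzero : ⟪χ ![b, c, u] + k • z, χ ![b, c, u] + k • z⟫ = 0 := by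
    simp only [inner_add_left, inner_add_right, real_inner_smul_left, real_inner_smul_right,
      hJu, hcross]
    rw [real_inner_comm (χ ![b, c, u]) z, hcross]
    ring
  rw [neg_smul, ← sub_eq_zero, sub_neg_eq_add]
  exact inner_self_eq_zero.mp hzero

end IsVCP

theorem exists_ne_zero_forall_inner_eq_zero [FiniteDimensional ℝ V] {n : ℕ} (u : Fin n → V)
    (hn : n < Module.finrank ℝ V) : ∃ c : V, c ≠ 0 ∧ ∀ i, ⟪c, u i⟫ = 0 := by
  obtain ⟨c, hc, hc0⟩ := Submodule.exists_mem_ne_zero_of_ne_bot <|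
    (LinearMap.pi fun i => innerₛₗ ℝ (u i)).ker_ne_bot_of_finrank_lt (by simpa using hn)
  exact ⟨c, hc0, fun i => by rw [real_inner_comm]; exact congr_fun hc i⟩

theorem exists_inner_sub_smul_eq_zero (a v : V) : ∃ t : ℝ, ⟪v - t • a, a⟫ = 0 := by
  rcases eq_or_ne a 0 with rfl | ha
  · exact ⟨0, inner_zero_right _⟩
  · refine ⟨⟪v, a⟫ / ⟪a, a⟫, ?_⟩
    rw [inner_sub_left, real_inner_smul_left, div_mul_cancel₀ _ (inner_self_ne_zero.2 ha),
      sub_self]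

theorem inner_sub_smul_right_of_inner_eq_zero {w a : V} (hwa : ⟪w, a⟫ = 0) (v : V) (t : ℝ) :
    ⟪w, v - t • a⟫ = ⟪w, v⟫ := by
  rw [inner_sub_right, real_inner_smul_right, hwa, mul_zero, sub_zero]

theorem exists_norm_eq_one_eq_smul {a : V} (ha : a ≠ 0) :
    ∃ (s : ℝ) (a' : V), s ≠ 0 ∧ ‖a'‖ = 1 ∧ a = s • a' :=
  ⟨‖a‖, ‖a‖⁻¹ • a, norm_ne_zero_iff.2 ha, norm_smul_inv_norm ha,
    (smul_inv_smul₀ (norm_ne_zero_iff.2 ha) a).symm⟩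

theorem inner_apply_eq_zero_of_skew {T : V →ₗ[ℝ] V} (hT : ∀ z w, ⟪T z, w⟫ = -⟪T w, z⟫)
    {a b : V} (hab : ⟪a, b⟫ = 0)
    (h : ∀ z v, ⟪z, b⟫ = 0 → ⟪v, a⟫ = 0 → ⟪v, b⟫ = 0 → ⟪T z, v⟫ = 0)
    {z v : V} (hzb : ⟪z, b⟫ = 0) (hvb : ⟪v, b⟫ = 0) : ⟪T z, v⟫ = 0 := by
  have hsub : ∀ x, ⟪x, b⟫ = 0 → ∀ t : ℝ, ⟪x - t • a, b⟫ = 0 := fun x hx t => by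
    rw [inner_sub_left, real_inner_smul_left, hx, hab, mul_zero, sub_zero]
  have hTaa : ⟪T a, a⟫ = 0 := by linarith [hT a a]
  have hTza : ⟪T z, a⟫ = 0 := by
    obtain ⟨s, hs⟩ := exists_inner_sub_smul_eq_zero a z
    rw [hT, ← inner_sub_smul_right_of_inner_eq_zero hTaa z s, h a _ hab hs (hsub z hzb s),
      neg_zero]
  obtain ⟨t, ht⟩ := exists_inner_sub_smul_eq_zero a v
  rw [← inner_sub_smul_right_of_inner_eq_zero hTza v t]
  exact h z _ hzb ht (hsub v hvb t)

theorem apply_mem_of_orthogonal_le_ker {T : V →ₗ[ℝ] V} (hT : ∀ z w, ⟪T z, w⟫ = -⟪T w, z⟫)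
    {K : Submodule ℝ V} [K.HasOrthogonalProjection] (h : Kᗮ ≤ LinearMap.ker T) (w : V) :
    T w ∈ K := by
  rw [← K.orthogonal_orthogonal]
  intro u hu
  rw [real_inner_comm, hT, h hu, inner_zero_left, neg_zero]

theorem IsAlgCurvature.apply_self {R : V →ₗ[ℝ] V →ₗ[ℝ] V →ₗ[ℝ] V} (hR : IsAlgCurvature R)
    (x : V) : R x x = 0 := by
  have h := hR.1 x x
  rw [eq_neg_iff_add_eq_zero, ← two_smul ℝ, smul_eq_zero] at h
  exact h.resolve_left two_ne_zero

/-- For `T = R(a, b)` this is the first CR condition tested against vectors of `{b, c}ᗮ`, where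
the projection `P` disappears, and extended by homogeneity to all `b` and all `c ⊥ a, b`. -/
def CrossSkew (χ : AlternatingMap ℝ V V (Fin 3)) (T : V →ₗ[ℝ] V) (a b : V) : Prop :=
  ∀ c, ⟪c, a⟫ = 0 → ⟪c, b⟫ = 0 → ∀ z v, ⟪z, b⟫ = 0 → ⟪z, c⟫ = 0 → ⟪v, b⟫ = 0 → ⟪v, c⟫ = 0 →
    ⟪T (χ ![b, c, z]), v⟫ + ⟪T z, χ ![b, c, v]⟫ = 0

theorem CrossSkew.inner_apply_eq_zero [FiniteDimensional ℝ V]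
    (hV : 6 < Module.finrank ℝ V) {χ : AlternatingMap ℝ V V (Fin 3)} (hχ : IsVCP χ)
    {T : V →ₗ[ℝ] V} (hT : ∀ z w, ⟪T z, w⟫ = -⟪T w, z⟫) {a b : V}
    (hJ : CrossSkew χ T a b) (hb : b ≠ 0) {z v : V} (hzb : ⟪z, b⟫ = 0)
    (hva : ⟪v, a⟫ = 0) (hvb : ⟪v, b⟫ = 0) : ⟪T z, v⟫ = 0 := by
  obtain ⟨c, hc0, hc⟩ :=
    exists_ne_zero_forall_inner_eq_zero ![a, b, z, v, χ ![b, z, v], χ ![b, z, a]] hV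
  obtain ⟨hca, hcb, hcz, hcv, hczv, hcza⟩ :
      ⟪c, a⟫ = 0 ∧ ⟪c, b⟫ = 0 ∧ ⟪c, z⟫ = 0 ∧ ⟪c, v⟫ = 0 ∧ ⟪c, χ ![b, z, v]⟫ = 0 ∧
        ⟪c, χ ![b, z, a]⟫ = 0 :=
    ⟨hc 0, hc 1, hc 2, hc 3, hc 4, hc 5⟩
  have hbc : ⟪b, c⟫ = 0 := by rwa [real_inner_comm]
  have hzc : ⟪z, c⟫ = 0 := by rwa [real_inner_comm]
  have hvc : ⟪v, c⟫ = 0 := by rwa [real_inner_comm]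
  set k := ⟪b, b⟫ * ⟪c, c⟫
  have hk : k ≠ 0 := mul_ne_zero (inner_self_ne_zero.2 hb) (inner_self_ne_zero.2 hc0)
  set Jz := χ ![b, c, z]
  have hJza : ⟪Jz, a⟫ = 0 := by rw [hχ.inner_eq_inner_snd, hcza]
  have hJzv : ⟪Jz, v⟫ = 0 := by rw [hχ.inner_eq_inner_snd, hczv]
  have hvJz : ⟪v, Jz⟫ = 0 := by rwa [real_inner_comm]
  have hJzb : ⟪Jz, b⟫ = 0 := hχ.inner_fst b c z
  have hcJz : ⟪c, Jz⟫ = 0 := by rw [real_inner_comm]; exact hχ.inner_snd b c z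
  have hc_rel := hJ c hca hcb z (χ ![b, c, v]) hzb hzc (hχ.inner_fst b c v) (hχ.inner_snd b c v)
  rw [hχ.apply_apply_of_orthogonal hbc hvb hvc, inner_smul_right] at hc_rel
  have hJz_rel := hJ Jz hJza hJzb c v hcb hcJz hvb hvJz
  rw [χ.map_vec3_swap_snd_thd, hχ.apply_apply_of_orthogonal hbc hzb hzc, neg_smul, neg_neg,
    map_smul, real_inner_smul_left] at hJz_rel
  have hv_rel := hJ v hva hvb c Jz hcb hcv hJzb hJzv
  rw [χ.map_vec3_swap_snd_thd, χ.map_vec3_swap_snd_thd b Jz v, map_neg, inner_neg_left,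
    inner_neg_right, hT] at hv_rel
  -- with `A = ⟪T (J z), J v⟫`, `X = ⟪T z, v⟫`, `Y = ⟪T c, χ(b, J z, v)⟫` these read
  -- `A = k X`, `k X = -Y` and `A = Y`
  have hkX : k * ⟪T z, v⟫ = 0 := by linarith
  exact (mul_eq_zero.1 hkX).resolve_left hk

theorem inner_projPerp_of_inner_eq_zero [FiniteDimensional ℝ V] {b c v : V} (hvb : ⟪v, b⟫ = 0)
    (hvc : ⟪v, c⟫ = 0) (u : V) : ⟪projPerp (Set.range ![b, c]) u, v⟫ = ⟪u, v⟫ :=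
  Submodule.inner_orthogonalProjectionOnto_eq_of_mem_right
    ⟨v, Submodule.isOrtho_span.2 (by simp [hvb, hvc]) (Submodule.mem_span_singleton_self v)⟩ u

namespace FirstCR

variable [FiniteDimensional ℝ V] {χ : AlternatingMap ℝ V V (Fin 3)}
  {R : V →ₗ[ℝ] V →ₗ[ℝ] V →ₗ[ℝ] V}

theorem inner_add_inner_eq_zero (hχ : IsVCP χ) (hCR : FirstCR (m := 1) χ R) {a b c : V}
    (ha : ‖a‖ = 1) (hb : ‖b‖ = 1) (hc : ‖c‖ = 1) (hab : ⟪a, b⟫ = 0) (hca : ⟪c, a⟫ = 0)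
    (hcb : ⟪c, b⟫ = 0) {z v : V} (hzb : ⟪z, b⟫ = 0) (hzc : ⟪z, c⟫ = 0) (hvb : ⟪v, b⟫ = 0)
    (hvc : ⟪v, c⟫ = 0) :
    ⟪R a b (χ ![b, c, z]), v⟫ + ⟪R a b z, χ ![b, c, v]⟫ = 0 := by
  have hON : Orthonormal ℝ ![a, b, c] := by
    refine ⟨fun i => by fin_cases i <;> assumption, fun i j hij => ?_⟩
    have hba : ⟪b, a⟫ = 0 := by rwa [real_inner_comm]
    have hac : ⟪a, c⟫ = 0 := by rwa [real_inner_comm]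
    have hbc : ⟪b, c⟫ = 0 := by rwa [real_inner_comm]
    fin_cases i <;> fin_cases j <;> simp_all
  have hsnoc : ∀ x, Fin.snoc ![b, c] x = ![b, c, x] := fun x => by ext i; fin_cases i <;> rfl
  have h := congrArg (⟪·, v⟫) (hCR ![a, b, c] hON z (Fin.forall_fin_two.2 ⟨hzb, hzc⟩))
  change ⟪projPerp (Set.range ![b, c]) (R a b (χ (Fin.snoc ![b, c] z))), v⟫ =
    ⟪χ (Fin.snoc ![b, c] (projPerp (Set.range ![b, c]) (R a b z))), v⟫ at h
  rw [hsnoc, hsnoc, inner_projPerp_of_inner_eq_zero hvb hvc, hχ.inner_eq_neg_inner,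
    real_inner_comm (projPerp _ _),
    inner_projPerp_of_inner_eq_zero (hχ.inner_fst b c v) (hχ.inner_snd b c v)] at h
  linarith

theorem crossSkew (hχ : IsVCP χ) (hCR : FirstCR (m := 1) χ R) {a b : V}
    (hab : ⟪a, b⟫ = 0) : CrossSkew χ (R a b) a b := by
  intro c hca hcb z v hzb hzc hvb hvc
  rcases eq_or_ne a 0 with rfl | ha
  · simp
  rcases eq_or_ne b 0 with rfl | hb
  · simp
  rcases eq_or_ne c 0 with rfl | hc
  · simp [χ.map_coord_zero (m := ![b, 0, z]) 1 rfl, χ.map_coord_zero (m := ![b, 0, v]) 1 rfl]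
  obtain ⟨r, a, hr, ha1, rfl⟩ := exists_norm_eq_one_eq_smul ha
  obtain ⟨s, b, hs, hb1, rfl⟩ := exists_norm_eq_one_eq_smul hb
  obtain ⟨t, c, ht, hc1, rfl⟩ := exists_norm_eq_one_eq_smul hc
  simp only [inner_smul_left, inner_smul_right, RCLike.conj_to_real, mul_eq_zero, hr, hs, ht,
    false_or] at hab hca hcb hzb hzc hvb hvc
  have h := hCR.inner_add_inner_eq_zero hχ ha1 hb1 hc1 hab hca hcb hzb hzc hvb hvc
  simp only [map_smul, LinearMap.smul_apply, χ.map_vec3_smul_fst, χ.map_vec3_smul_snd,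
    inner_smul_left, inner_smul_right, RCLike.conj_to_real]
  linear_combination r * s * s * t * h

theorem inner_apply_eq_zero (hV : 6 < Module.finrank ℝ V) (hχ : IsVCP χ)
    (hR : IsAlgCurvature R) (hCR : FirstCR (m := 1) χ R) {a b z v : V} (hab : ⟪a, b⟫ = 0)
    (hzb : ⟪z, b⟫ = 0) (hvb : ⟪v, b⟫ = 0) : ⟪R a b z, v⟫ = 0 := by
  rcases eq_or_ne b 0 with rfl | hb
  · simp
  refine inner_apply_eq_zero_of_skew (hR.2.1 a b) hab (fun _ _ hzb hva hvb => ?_) hzb hvb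
  exact (hCR.crossSkew hχ hab).inner_apply_eq_zero hV hχ (hR.2.1 a b) hb hzb hva hvb

theorem apply_eq_zero_of_inner_eq_zero (hV : 6 < Module.finrank ℝ V) (hχ : IsVCP χ)
    (hR : IsAlgCurvature R) (hCR : FirstCR (m := 1) χ R) {a b z : V} (hab : ⟪a, b⟫ = 0)
    (hza : ⟪z, a⟫ = 0) (hzb : ⟪z, b⟫ = 0) : R a b z = 0 := by
  have haz : ⟪a, z⟫ = 0 := by rwa [real_inner_comm]
  have hbz : ⟪b, z⟫ = 0 := by rwa [real_inner_comm]
  have hRzb : ⟪R a b z, b⟫ = 0 := by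
    have h := congrArg (⟪·, b⟫) (hR.2.2 a b z)
    simp only [inner_add_left, inner_zero_left] at h
    have h1 : ⟪R b z a, b⟫ = 0 := hCR.inner_apply_eq_zero hV hχ hR hbz haz hbz
    linarith [hR.2.1 z a b b]
  obtain ⟨t, ht⟩ := exists_inner_sub_smul_eq_zero b (R a b z)
  rw [← inner_self_eq_zero (𝕜 := ℝ), ← inner_sub_smul_right_of_inner_eq_zero hRzb _ t]
  exact hCR.inner_apply_eq_zero hV hχ hR hab hzb ht

theorem apply_eq_zero (hV : 6 < Module.finrank ℝ V) (hχ : IsVCP χ) (hR : IsAlgCurvature R)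
    (hCR : FirstCR (m := 1) χ R) {x y z : V} (hzx : ⟪z, x⟫ = 0) (hzy : ⟪z, y⟫ = 0) :
    R x y z = 0 := by
  obtain ⟨t, ht⟩ := exists_inner_sub_smul_eq_zero x y
  have hRy : R x y = R x (y - t • x) := by
    rw [map_sub, map_smul, hR.apply_self, smul_zero, sub_zero]
  rw [hRy]
  refine hCR.apply_eq_zero_of_inner_eq_zero hV hχ hR ?_ hzx ?_
  · rwa [real_inner_comm]
  · rw [inner_sub_right, real_inner_smul_right, hzx, hzy, mul_zero, sub_zero]

end FirstCR

/-- On an 8-dimensional real inner product space with a 3-fold VCP `χ`, an algebraic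
curvature operator satisfying the first CR-integrability condition kills every
vector orthogonal to its two arguments, and maps `span{x,y}` into itself. -/
theorem dim8_firstCR_curvature_in_so_E {V : Type*} [NormedAddCommGroup V]
    [InnerProductSpace ℝ V] [FiniteDimensional ℝ V] (h8 : Module.finrank ℝ V = 8)
    (χ : AlternatingMap ℝ V V (Fin 3)) (hχ : IsVCP χ)
    (R : V →ₗ[ℝ] V →ₗ[ℝ] V →ₗ[ℝ] V) (hR : IsAlgCurvature R)
    (hCR : FirstCR (m := 1) χ R) :
    (∀ x y z : V, ⟪z, x⟫ = 0 → ⟪z, y⟫ = 0 → R x y z = 0) ∧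
    (∀ x y : V, ∀ w ∈ Submodule.span ℝ ({x, y} : Set V),
      R x y w ∈ Submodule.span ℝ ({x, y} : Set V)) := by
  have hV : 6 < Module.finrank ℝ V := by omega
  have hkill : ∀ x y z : V, ⟪z, x⟫ = 0 → ⟪z, y⟫ = 0 → R x y z = 0 :=
    fun x y z => hCR.apply_eq_zero hV hχ hR
  refine ⟨hkill, fun x y w _ => apply_mem_of_orthogonal_le_ker (hR.2.1 x y) (fun u hu => ?_) w⟩
  exact hkill x y u (Submodule.inner_left_of_mem_orthogonal (Submodule.subset_span (by simp)) hu)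
    (Submodule.inner_left_of_mem_orthogonal (Submodule.subset_span (by simp)) hu)
end

section
/- Let V be an 8-dimensional real inner product space endowed with a 3-fold vector cross product χ, let ξ ∈ V be a unit vector, set W = ξ^⊥ and define the 2-fold vector cross product χ_ξ on W by χ_ξ(x,y) := χ(ξ,x,y). Given an algebraic curvature operator R on V, define t(R) : W × W → End(W) by t(R)(x,y) := P_W ∘ R(x,y)|_W, where P_W is the orthogonal projection of V onto W. Then t(R) is an algebraic curvature operator on W; moreover, if R satisfies the first CR-integrability condition on (V,χ) (i.e., for every orthonormal triple (w₁,w₂,w₃) in V and every z ∈ V orthogonal to both w₂ and w₃: P(R(w₁,w₂)(χ(w₂,w₃,z))) = χ(w₂,w₃, P(R(w₁,w₂)z)), with P the orthogonal projection onto span{w₂,w₃}^⊥), then t(R) satisfies the first CR-integrability condition on (W,χ_ξ) (i.e., for every orthonormal pair (w₁,w₂) in W and every z ∈ W with z ⊥ w₂: P'(t(R)(w₁,w₂)(χ_ξ(w₂,z))) = χ_ξ(w₂, P'(t(R)(w₁,w₂)z)), with P' the orthogonal projection of W onto the orthogonal complement of w₂ in W). -/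
open RealInnerProductSpace

variable {V : Type*} [NormedAddCommGroup V] [InnerProductSpace ℝ V]

/-!
Compressing `R` to `W = ξᗮ` preserves the three curvature identities because the orthogonal
projection `P_W` is linear and self-adjoint and fixes `W`. For the CR condition, an orthonormal
pair `(w₁, w₂)` in `W` extends to the orthonormal triple `(w₁, w₂, ξ)` in `V`. Projecting first
onto `W` and then onto `w₂ᗮ` inside `W` is the projection onto `span {w₂, ξ}ᗮ`, and
`χ_ξ(w₂, ·) = -χ(w₂, ξ, ·)`, so the condition on `W` is the condition on `V` for that triple.
-/

open Submodule

section Projections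

variable [FiniteDimensional ℝ V]

lemma projPerp_singleton_of_norm_eq_one {e : V} (he : ‖e‖ = 1) (v : V) :
    projPerp {e} v = v - ⟪e, v⟫ • e := by
  rw [projPerp, orthogonalProjection, ← starProjection_apply, starProjection_orthogonal_val,
    starProjection_unit_singleton ℝ he]

lemma projPerp_pair {e f : V} (hef : Orthonormal ℝ ![e, f]) (v : V) :
    projPerp {e, f} v = v - ⟪e, v⟫ • e - ⟪f, v⟫ • f := by
  have he : ‖e‖ = 1 := hef.1 0
  have hf : ‖f‖ = 1 := hef.1 1
  have hfe : ⟪f, e⟫ = 0 := by simpa using orthonormal_iff_ite.mp hef 1 0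
  have hef : ⟪e, f⟫ = 0 := by rw [real_inner_comm, hfe]
  rw [projPerp, orthogonalProjection, ← starProjection_apply, starProjection_orthogonal_val,
    sub_sub, eq_starProjection_of_mem_of_inner_eq_zero]
  · exact add_mem (smul_mem _ _ (subset_span (by simp))) (smul_mem _ _ (subset_span (by simp)))
  · intro w hw
    obtain ⟨a, b, rfl⟩ := mem_span_pair.mp hw
    simp [inner_add_right, inner_sub_left, inner_add_left, real_inner_smul_left,
      real_inner_smul_right, he, hf, hef, hfe, real_inner_comm v]

end Projections

section Compression

variable (K : Submodule ℝ V) [K.HasOrthogonalProjection]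

/-- The paper's `t(R)`. -/
noncomputable def compressCurvature (R : V →ₗ[ℝ] V →ₗ[ℝ] V →ₗ[ℝ] V) :
    K →ₗ[ℝ] K →ₗ[ℝ] K →ₗ[ℝ] K :=
  LinearMap.mk₂ ℝ (fun x y => K.orthogonalProjectionOnto.toLinearMap ∘ₗ R x y ∘ₗ K.subtype)
    (fun x x' y => by ext; simp) (fun c x y => by ext; simp)
    (fun x y y' => by ext; simp) (fun c x y => by ext; simp)

variable {K}

lemma compressCurvature_apply (R : V →ₗ[ℝ] V →ₗ[ℝ] V →ₗ[ℝ] V) (x y z : K) :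
    compressCurvature K R x y z = K.orthogonalProjectionOnto (R x y z) :=
  rfl

lemma coe_compressCurvature (R : V →ₗ[ℝ] V →ₗ[ℝ] V →ₗ[ℝ] V) (x y z : K) :
    (compressCurvature K R x y z : V) = K.starProjection (R x y z) :=
  rfl

lemma IsAlgCurvature.compressCurvature {R : V →ₗ[ℝ] V →ₗ[ℝ] V →ₗ[ℝ] V} (hR : IsAlgCurvature R) :
    IsAlgCurvature (compressCurvature K R) := by
  obtain ⟨hanti, hskew, hbianchi⟩ := hR
  refine ⟨fun x y => ?_, fun x y z w => ?_, fun x y z => ?_⟩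
  · ext z
    simp [coe_compressCurvature, hanti (x : V)]
  · simp only [coe_inner, coe_compressCurvature, inner_starProjection_left_eq_right,
      starProjection_mem_subspace_eq_self]
    exact hskew _ _ _ _
  · apply Subtype.coe_injective
    simp only [coe_add, coe_compressCurvature, ← map_add, hbianchi, map_zero, coe_zero]

end Compression

lemma AlternatingMap.map_vecCons_vecCons_swap {R M N : Type*} [CommRing R] [AddCommGroup M]
    [Module R M] [AddCommGroup N] [Module R N] {n : ℕ} (f : M [⋀^Fin (n + 2)]→ₗ[R] N)
    (a b : M) (v : Fin n → M) :
    f (Matrix.vecCons a (Matrix.vecCons b v)) = -f (Matrix.vecCons b (Matrix.vecCons a v)) := by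
  rw [← f.map_swap (v := Matrix.vecCons b (Matrix.vecCons a v)) (i := 0) (j := 1) (by simp)]
  congr 1
  ext i
  refine Fin.cases ?_ (Fin.cases ?_ fun j => ?_) i
  · simp
  · simp
  · rw [Function.comp_apply,
      Equiv.swap_apply_of_ne_of_ne (Fin.succ_ne_zero _) (Fin.succ_succ_ne_one _)]
    rfl

section Slice

variable {n : ℕ}

/-- The paper's `χ_ξ`, projected back to `ξᗮ` so that it is defined for every `χ`;
for a VCP the projection does nothing (`coe_sliceCross`). -/
noncomputable def sliceCross (χ : V [⋀^Fin (n + 1)]→ₗ[ℝ] V) (ξ : V) :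
    (ℝ ∙ ξ)ᗮ [⋀^Fin n]→ₗ[ℝ] (ℝ ∙ ξ)ᗮ :=
  (ℝ ∙ ξ)ᗮ.orthogonalProjectionOnto.toLinearMap.compAlternatingMap
    ((χ.curryLeft ξ).compLinearMap (ℝ ∙ ξ)ᗮ.subtype)

lemma coe_sliceCross {χ : V [⋀^Fin (n + 1)]→ₗ[ℝ] V} (hχ : ∀ v, ⟪χ v, v 0⟫ = 0) (ξ : V)
    (v : Fin n → (ℝ ∙ ξ)ᗮ) :
    (sliceCross χ ξ v : V) = χ (Matrix.vecCons ξ fun i => v i) := by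
  refine starProjection_eq_self_iff.mpr (mem_orthogonal_singleton_iff_inner_right.mpr ?_)
  rw [real_inner_comm]
  exact hχ _

lemma coe_sliceCross_pair {χ : V [⋀^Fin 3]→ₗ[ℝ] V} (hχ : ∀ v, ⟪χ v, v 0⟫ = 0) (ξ : V)
    (x y : (ℝ ∙ ξ)ᗮ) : (sliceCross χ ξ ![x, y] : V) = χ ![ξ, x, y] := by
  rw [coe_sliceCross hχ]
  congr
  ext i
  fin_cases i <;> rfl

end Slice

section FirstCR

variable [FiniteDimensional ℝ V]

lemma FirstCR.apply_orthonormal_triple {χ : V [⋀^Fin 3]→ₗ[ℝ] V} {R : V →ₗ[ℝ] V →ₗ[ℝ] V →ₗ[ℝ] V}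
    (h : FirstCR (m := 1) χ R) {a b c z : V} (habc : Orthonormal ℝ ![a, b, c])
    (hzb : ⟪z, b⟫ = 0) (hzc : ⟪z, c⟫ = 0) :
    projPerp {b, c} (R a b (χ ![b, c, z])) = χ ![b, c, projPerp {b, c} (R a b z)] := by
  have hsnoc : ∀ u : V, (Fin.snoc ![b, c] u : Fin 3 → V) = ![b, c, u] := by
    intro u
    ext i
    fin_cases i <;> rfl
  have := h ![a, b, c] habc z (Fin.forall_fin_two.mpr ⟨hzb, hzc⟩)
  have htail : Fin.tail ![a, b, c] = ![b, c] := rfl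
  rwa [htail, hsnoc, hsnoc, Matrix.range_cons_cons_empty] at this

lemma firstCR_of_orthonormal_pair {σ : V [⋀^Fin 2]→ₗ[ℝ] V} {S : V →ₗ[ℝ] V →ₗ[ℝ] V →ₗ[ℝ] V}
    (h : ∀ a b z : V, Orthonormal ℝ ![a, b] → ⟪z, b⟫ = 0 →
      projPerp {b} (S a b (σ ![b, z])) = σ ![b, projPerp {b} (S a b z)]) :
    FirstCR (m := 0) σ S := by
  intro w hw z hz
  have hw2 : w = ![w 0, w 1] := by
    ext i
    fin_cases i <;> rfl
  have htail : Fin.tail w = ![w 1] := by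
    ext i
    fin_cases i
    rfl
  have hsnoc : ∀ u : V, (Fin.snoc ![w 1] u : Fin 2 → V) = ![w 1, u] := by
    intro u
    ext i
    fin_cases i <;> rfl
  rw [htail, hsnoc, hsnoc, Matrix.range_cons_empty]
  exact h _ _ z (hw2 ▸ hw) (by simpa [htail] using hz 0)

lemma coe_projPerp_orthogonalProjectionOnto {ξ : V} (hξ : ‖ξ‖ = 1) {u : (ℝ ∙ ξ)ᗮ}
    (hu : ‖u‖ = 1) (v : V) :
    ((projPerp ({u} : Set (ℝ ∙ ξ)ᗮ) ((ℝ ∙ ξ)ᗮ.orthogonalProjectionOnto v) : (ℝ ∙ ξ)ᗮ) : V) =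
      projPerp {(u : V), ξ} v := by
  have huξ : ⟪(u : V), ξ⟫ = 0 := mem_orthogonal_singleton_iff_inner_left.mp u.2
  have hortho : Orthonormal ℝ ![(u : V), ξ] := by
    simp [orthonormal_vecCons_iff, hξ, huξ, show ‖(u : V)‖ = 1 from hu]
  rw [projPerp_singleton_of_norm_eq_one hu, projPerp_pair hortho, Submodule.coe_sub,
    Submodule.coe_smul, coe_inner, ← starProjection_apply, starProjection_orthogonal_val, starProjection_unit_singleton ℝ hξ,
    inner_sub_right, real_inner_smul_right, huξ]
  module

lemma FirstCR.sliceCross_compressCurvature {χ : V [⋀^Fin 3]→ₗ[ℝ] V}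
    (hχ : ∀ v, ⟪χ v, v 0⟫ = 0) {ξ : V} (hξ : ‖ξ‖ = 1) {R : V →ₗ[ℝ] V →ₗ[ℝ] V →ₗ[ℝ] V}
    (h : FirstCR (m := 1) χ R) :
    FirstCR (m := 0) (sliceCross χ ξ) (compressCurvature (ℝ ∙ ξ)ᗮ R) := by
  refine firstCR_of_orthonormal_pair fun a b z hab hzb => Subtype.coe_injective ?_
  have hperp : ∀ u : (ℝ ∙ ξ)ᗮ, ⟪(u : V), ξ⟫ = 0 := fun u =>
    mem_orthogonal_singleton_iff_inner_left.mp u.2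
  have hb1 : ‖b‖ = 1 := hab.1 1
  obtain ⟨ha, hab, -⟩ := orthonormal_vecCons_iff.mp hab
  have habξ : Orthonormal ℝ ![(a : V), b, ξ] := by
    simpa [orthonormal_vecCons_iff, hperp, hξ, coe_inner] using ⟨ha, hab 0, hb1⟩
  calc ((projPerp {b} (compressCurvature _ R a b (sliceCross χ ξ ![b, z])) : _) : V)
      = projPerp {(b : V), ξ} (R a b (χ ![ξ, b, z])) := by
        rw [compressCurvature_apply, coe_projPerp_orthogonalProjectionOnto hξ hb1,
          coe_sliceCross_pair hχ]
    _ = -projPerp {(b : V), ξ} (R a b (χ ![b, ξ, z])) := by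
        rw [χ.map_vecCons_vecCons_swap ξ, map_neg]
        simp only [projPerp, map_neg, Submodule.coe_neg]
    _ = -χ ![b, ξ, projPerp {(b : V), ξ} (R a b z)] := by
        rw [h.apply_orthonormal_triple (z := z) habξ hzb (hperp z)]
    _ = ((sliceCross χ ξ ![b, projPerp {b} (compressCurvature _ R a b z)] : _) : V) := by
        rw [coe_sliceCross_pair hχ, compressCurvature_apply,
          coe_projPerp_orthogonalProjectionOnto hξ hb1, χ.map_vecCons_vecCons_swap ξ]

end FirstCR

theorem restriction_of_algCurvature_general {V : Type*} [NormedAddCommGroup V]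
    [InnerProductSpace ℝ V] [FiniteDimensional ℝ V]
    (χ : AlternatingMap ℝ V V (Fin 3)) (hχ : IsVCP χ)
    (ξ : V) (hξ : ‖ξ‖ = 1)
    (R : V →ₗ[ℝ] V →ₗ[ℝ] V →ₗ[ℝ] V) (hR : IsAlgCurvature R) :
    ∃ σ : AlternatingMap ℝ ↥((Submodule.span ℝ {ξ})ᗮ) ↥((Submodule.span ℝ {ξ})ᗮ) (Fin 2),
      (∀ x y : ↥((Submodule.span ℝ {ξ})ᗮ), (σ ![x, y] : V) = χ ![ξ, ↑x, ↑y]) ∧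
      ∃ S : ↥((Submodule.span ℝ {ξ})ᗮ) →ₗ[ℝ] ↥((Submodule.span ℝ {ξ})ᗮ) →ₗ[ℝ]
          ↥((Submodule.span ℝ {ξ})ᗮ) →ₗ[ℝ] ↥((Submodule.span ℝ {ξ})ᗮ),
        (∀ x y z : ↥((Submodule.span ℝ {ξ})ᗮ),
          (S x y z : V) = projPerp ({ξ} : Set V) (R ↑x ↑y ↑z)) ∧
        IsAlgCurvature S ∧
        (FirstCR (m := 1) χ R → FirstCR (m := 0) σ S) := by
  have hχ₀ : ∀ v, ⟪χ v, v 0⟫ = 0 := fun v => hχ.1 v 0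
  exact ⟨sliceCross χ ξ, coe_sliceCross_pair hχ₀ ξ, compressCurvature _ R, fun _ _ _ => rfl,
    hR.compressCurvature, FirstCR.sliceCross_compressCurvature hχ₀ hξ⟩

/-- Reduction from dimension 8 to dimension 7 for the first CR-integrability
condition. Let `ξ` be a unit vector in an 8-dimensional `(V,χ)`, `W = ξᗮ`, `σ` the
2-fold VCP `χ_ξ(x,y) = χ(ξ,x,y)` on `W`, and `t(R)(x,y) = P_W ∘ R(x,y)|_W`. Then
`t(R)` is an algebraic curvature operator on `W`, and if `R` satisfies the first
CR-integrability condition on `(V,χ)` then `t(R)` satisfies it on `(W,σ)`. -/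
theorem restriction_of_algCurvature {V : Type*} [NormedAddCommGroup V]
    [InnerProductSpace ℝ V] [FiniteDimensional ℝ V] (h8 : Module.finrank ℝ V = 8)
    (χ : AlternatingMap ℝ V V (Fin 3)) (hχ : IsVCP χ)
    (ξ : V) (hξ : ‖ξ‖ = 1)
    (R : V →ₗ[ℝ] V →ₗ[ℝ] V →ₗ[ℝ] V) (hR : IsAlgCurvature R) :
    ∃ σ : AlternatingMap ℝ ↥((Submodule.span ℝ {ξ})ᗮ) ↥((Submodule.span ℝ {ξ})ᗮ) (Fin 2),
      (∀ x y : ↥((Submodule.span ℝ {ξ})ᗮ), (σ ![x, y] : V) = χ ![ξ, ↑x, ↑y]) ∧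
      ∃ S : ↥((Submodule.span ℝ {ξ})ᗮ) →ₗ[ℝ] ↥((Submodule.span ℝ {ξ})ᗮ) →ₗ[ℝ]
          ↥((Submodule.span ℝ {ξ})ᗮ) →ₗ[ℝ] ↥((Submodule.span ℝ {ξ})ᗮ),
        (∀ x y z : ↥((Submodule.span ℝ {ξ})ᗮ),
          (S x y z : V) = projPerp ({ξ} : Set V) (R ↑x ↑y ↑z)) ∧
        IsAlgCurvature S ∧
        (FirstCR (m := 1) χ R → FirstCR (m := 0) σ S) :=
  restriction_of_algCurvature_general χ hχ ξ hξ R hR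
end
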